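/- For every n ∈ ℕ, the following four L_OR theories are deductively equivalent (prove the same sentences): (1) IOpen = PA⁻ + {I_x θ : θ(x, z̄) quantifier-free L_OR formula}; (2) PA⁻ + {I^<_x θ : θ(x, z̄) quantifier-free L_OR formula}; (3) PA⁻ + {I^{(n+1)-step}_x θ : θ(x, z̄) quantifier-free L_OR formula}; (4) PA⁻ + {I^{n+1}_x θ : θ(x, z̄) quantifier-free L_OR formula}. -/

import Mathlib

open FirstOrder Language

/-! ### The language `L_OR = {0, 1, +, ×, <}` of ordered rings -/

/-- Function symbols of the language of ordered rings. -/
inductive LorFunc : ℕ → Type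
  | zero : LorFunc 0
  | one : LorFunc 0
  | add : LorFunc 2
  | mul : LorFunc 2

/-- Relation symbols of the language of ordered rings: just `<`. -/
inductive LorRel : ℕ → Type
  | lt : LorRel 2

/-- The first-order language of ordered rings. -/
def Lor : Language := ⟨LorFunc, LorRel⟩

/-- The term `0`. -/
def zeroT {α : Type} : Lor.Term α := Constants.term LorFunc.zero

/-- The term `1`. -/
def oneT {α : Type} : Lor.Term α := Constants.term LorFunc.one

/-- Addition of terms. -/
def addT {α : Type} (t u : Lor.Term α) : Lor.Term α := Functions.apply₂ LorFunc.add t u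

/-- Multiplication of terms. -/
def mulT {α : Type} (t u : Lor.Term α) : Lor.Term α := Functions.apply₂ LorFunc.mul t u

/-- The term `2`, an abbreviation for `1 + 1`. -/
def twoT {α : Type} : Lor.Term α := addT oneT oneT

/-- The numeral `k`, i.e. the closed term `(⋯((0+1)+1)+⋯+1)` with `k` ones. -/
def numT {α : Type} : ℕ → Lor.Term α
  | 0 => zeroT
  | n + 1 => addT (numT n) oneT

/-- The bounded formula `t < u`. -/
def ltBF {α : Type} {n : ℕ} (t u : Lor.Term (α ⊕ Fin n)) : Lor.BoundedFormula α n :=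
  Relations.boundedFormula₂ LorRel.lt t u

/-- The formula `t < u`. -/
def ltFml {α : Type} (t u : Lor.Term α) : Lor.Formula α :=
  Relations.formula₂ LorRel.lt t u

/-- The formula `t ≤ u`, an abbreviation for `t < u ∨ t = u`. -/
def leFml {α : Type} (t u : Lor.Term α) : Lor.Formula α :=
  ltFml t u ⊔ Term.equal t u

/-! ### The base theory `PA⁻` -/

/-- `PA⁻`, the theory of non-negative parts of discretely ordered rings. -/
def PAminus : Lor.Theory :=
  { -- (P1) associativity of +
    ∀' ∀' ∀' (addT (addT &0 &1) &2 =' addT &0 (addT &1 &2)),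
    -- (P2) commutativity of +
    ∀' ∀' (addT &0 &1 =' addT &1 &0),
    -- (P3) associativity of ×
    ∀' ∀' ∀' (mulT (mulT &0 &1) &2 =' mulT &0 (mulT &1 &2)),
    -- (P4) commutativity of ×
    ∀' ∀' (mulT &0 &1 =' mulT &1 &0),
    -- (P5) distributivity
    ∀' ∀' ∀' (mulT &0 (addT &1 &2) =' addT (mulT &0 &1) (mulT &0 &2)),
    -- (P6) x + 0 = x
    ∀' (addT &0 zeroT =' &0),
    -- (P7) x × 0 = 0
    ∀' (mulT &0 zeroT =' zeroT),
    -- (P8) x × 1 = x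
    ∀' (mulT &0 oneT =' &0),
    -- (P9) transitivity of <
    ∀' ∀' ∀' (ltBF &0 &1 ⊓ ltBF &1 &2 ⟹ ltBF &0 &2),
    -- (P10) irreflexivity of <
    ∀' ∼(ltBF &0 &0),
    -- (P11) linearity of <
    ∀' ∀' (ltBF &0 &1 ⊔ &0 =' &1 ⊔ ltBF &1 &0),
    -- (P12) x < y → x + z < y + z
    ∀' ∀' ∀' (ltBF &0 &1 ⟹ ltBF (addT &0 &2) (addT &1 &2)),
    -- (P13) z ≠ 0 ∧ x < y → x × z < y × z
    ∀' ∀' ∀' (∼(&2 =' zeroT) ⊓ ltBF &0 &1 ⟹ ltBF (mulT &0 &2) (mulT &1 &2)),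
    -- (P14) x < y ↔ ∃z ((x + z) + 1 = y)
    ∀' ∀' (ltBF &0 &1 ⇔ ∃' (addT (addT &0 &2) oneT =' &1)),
    -- (P15) 0 < 1 ∧ (x > 0 → x ≥ 1)
    ltBF zeroT oneT ⊓ ∀' (ltBF zeroT &0 ⟹ ltBF oneT &0 ⊔ oneT =' &0),
    -- (P16) x ≥ 0
    ∀' (ltBF zeroT &0 ⊔ zeroT =' &0) }

/-! ### Formulas `θ(x, z̄)` with a distinguished variable `x` and parameters `z̄`

A formula `θ(x, z̄)` with `m` parameters `z̄` and a distinguished induction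
variable `x` is represented as `θ : Lor.Formula (Fin m ⊕ Fin 1)`, where the
`Fin m` component gives the parameters and the `Fin 1` component gives `x`. -/

/-- The distinguished variable `x` as a term. -/
def xT {m : ℕ} : Lor.Term (Fin m ⊕ Fin 1) := Term.var (Sum.inr 0)

/-- `θ(t, z̄)`, where `t` is a term possibly involving `x` and the parameters. -/
def substX {m : ℕ} (θ : Lor.Formula (Fin m ⊕ Fin 1)) (t : Lor.Term (Fin m ⊕ Fin 1)) :
    Lor.Formula (Fin m ⊕ Fin 1) :=
  θ.subst (Sum.elim (fun i => Term.var (Sum.inl i)) fun _ => t)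

/-- `θ(t, z̄)` where `t` is a term in the parameters only. -/
def substP {m : ℕ} (θ : Lor.Formula (Fin m ⊕ Fin 1)) (t : Lor.Term (Fin m)) :
    Lor.Formula (Fin m) :=
  θ.subst (Sum.elim (fun i => Term.var i) fun _ => t)

/-- `Formula.iAlls` with its Mathlib (Dec 2024) signature and definition. -/
noncomputable def iAllsOld {L : Language} {α β γ : Type*} [Finite γ] (f : α → β ⊕ γ)
    (φ : L.Formula α) : L.Formula β :=
  let e := Classical.choice (Classical.choose_spec (Finite.exists_equiv_fin γ))
  (BoundedFormula.relabel (fun a => Sum.map id e (f a)) φ).alls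

/-- `∀x θ(x, z̄)`. -/
noncomputable def allX {m : ℕ} (θ : Lor.Formula (Fin m ⊕ Fin 1)) : Lor.Formula (Fin m) :=
  iAllsOld (fun p => p : Fin m ⊕ Fin 1 → Fin m ⊕ Fin 1) θ

/-- The universal closure of a formula, as a sentence. -/
noncomputable def closeAll {α : Type} [Finite α] (φ : Lor.Formula α) : Lor.Sentence :=
  iAllsOld (Sum.inr : α → Empty ⊕ α) φ

/-- `∀x' < x, θ(x', z̄)`, a formula with free variable `x` (and parameters). -/
noncomputable def allLtX {m : ℕ} (θ : Lor.Formula (Fin m ⊕ Fin 1)) :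
    Lor.Formula (Fin m ⊕ Fin 1) :=
  iAllsOld (fun p => p : (Fin m ⊕ Fin 1) ⊕ Fin 1 → (Fin m ⊕ Fin 1) ⊕ Fin 1)
    (ltFml (Term.var (Sum.inr 0)) (Term.var (Sum.inl (Sum.inr 0))) ⟹
      θ.relabel (Sum.elim (fun i => Sum.inl (Sum.inl i)) fun _ => Sum.inr 0))

/-- `∀x' ≤ x, θ(x', z̄)`, a formula with free variable `x` (and parameters). -/
noncomputable def allLeX {m : ℕ} (θ : Lor.Formula (Fin m ⊕ Fin 1)) :
    Lor.Formula (Fin m ⊕ Fin 1) :=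
  iAllsOld (fun p => p : (Fin m ⊕ Fin 1) ⊕ Fin 1 → (Fin m ⊕ Fin 1) ⊕ Fin 1)
    (leFml (Term.var (Sum.inr 0)) (Term.var (Sum.inl (Sum.inr 0))) ⟹
      θ.relabel (Sum.elim (fun i => Sum.inl (Sum.inl i)) fun _ => Sum.inr 0))

/-- The conjunction `⋀_{k<j} θ(k, z̄)`. -/
def conjNum {m : ℕ} (θ : Lor.Formula (Fin m ⊕ Fin 1)) : ℕ → Lor.Formula (Fin m)
  | 0 => ⊤
  | j + 1 => conjNum θ j ⊓ substP θ (numT j)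

/-- The conjunction `⋀_{k<j} θ(x+k, z̄)`. -/
def conjShift {m : ℕ} (θ : Lor.Formula (Fin m ⊕ Fin 1)) : ℕ → Lor.Formula (Fin m ⊕ Fin 1)
  | 0 => ⊤
  | j + 1 => conjShift θ j ⊓ substX θ (addT xT (numT j))

/-! ### Induction axioms -/

/-- The induction axiom `I_x θ`:
`∀z̄( θ(0,z̄) ∧ ∀x(θ(x,z̄) → θ(x+1,z̄)) → ∀x θ(x,z̄) )`. -/
noncomputable def indAx {m : ℕ} (θ : Lor.Formula (Fin m ⊕ Fin 1)) : Lor.Sentence :=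
  closeAll ((substP θ zeroT ⊓ allX (θ ⟹ substX θ (addT xT oneT))) ⟹ allX θ)

/-- The `<`-induction axiom `I^<_x θ`:
`∀z̄( ∀y(∀x<y θ(x,z̄) → θ(y,z̄)) → ∀x θ(x,z̄) )`. -/
noncomputable def indLtAx {m : ℕ} (θ : Lor.Formula (Fin m ⊕ Fin 1)) : Lor.Sentence :=
  closeAll (allX (allLtX θ ⟹ θ) ⟹ allX θ)

/-- The `(n+1)`-step induction axiom `I^{(n+1)-step}_x θ`:
`∀z̄( ⋀_{k<n+1} θ(k,z̄) ∧ ∀x(θ(x,z̄) → θ(x+n+1,z̄)) → ∀x θ(x,z̄) )`. -/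
noncomputable def indStepAx {m : ℕ} (n : ℕ) (θ : Lor.Formula (Fin m ⊕ Fin 1)) : Lor.Sentence :=
  closeAll ((conjNum θ (n + 1) ⊓ allX (θ ⟹ substX θ (addT xT (numT (n + 1))))) ⟹ allX θ)

/-- The `(n+1)`-induction axiom `I^{n+1}_x θ`:
`∀z̄( ⋀_{k<n+1} θ(k,z̄) ∧ ∀x(⋀_{k<n+1} θ(x+k,z̄) → θ(x+n+1,z̄)) → ∀x θ(x,z̄) )`. -/
noncomputable def indKAx {m : ℕ} (n : ℕ) (θ : Lor.Formula (Fin m ⊕ Fin 1)) : Lor.Sentence :=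
  closeAll ((conjNum θ (n + 1) ⊓ allX (conjShift θ (n + 1) ⟹ substX θ (addT xT (numT (n + 1))))) ⟹
    allX θ)

/-- The polynomial induction axiom `I^p_x θ`:
`∀z̄( θ(0,z̄) ∧ ∀x(θ(x,z̄) → θ(2x,z̄) ∧ θ(2x+1,z̄)) → ∀x θ(x,z̄) )`, where `2x` is `(1+1)×x`. -/
noncomputable def indPAx {m : ℕ} (θ : Lor.Formula (Fin m ⊕ Fin 1)) : Lor.Sentence :=
  closeAll ((substP θ zeroT ⊓
      allX (θ ⟹ substX θ (mulT twoT xT) ⊓ substX θ (addT (mulT twoT xT) oneT))) ⟹ allX θ)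

/-! ### Theories -/

/-- Peano arithmetic: `PA⁻` plus induction for all `L_OR` formulas. -/
noncomputable def PA : Lor.Theory :=
  PAminus ∪ {σ | ∃ (m : ℕ) (θ : Lor.Formula (Fin m ⊕ Fin 1)), σ = indAx θ}

/-- `IOpen`: `PA⁻` plus induction for all quantifier-free `L_OR` formulas. -/
noncomputable def IOpen : Lor.Theory :=
  PAminus ∪ {σ | ∃ (m : ℕ) (θ : Lor.Formula (Fin m ⊕ Fin 1)), θ.IsQF ∧ σ = indAx θ}

/-! ### Notions of inductiveness

A formula `φ(x)` with exactly one free variable `x` is represented as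
`φ : Lor.Formula (Fin 0 ⊕ Fin 1)` (no parameters). -/

/-- Formulas `φ(x)` with exactly one free variable `x`. -/
abbrev OneVarFormula : Type := Lor.Formula (Fin 0 ⊕ Fin 1)

/-- The sentence `∀x φ(x)`. -/
noncomputable def allS (φ : OneVarFormula) : Lor.Sentence := closeAll (allX φ)

/-- `φ(x)` is inductive: `PA⁻ ⊢ φ(0)` and `PA⁻ ⊢ ∀x(φ(x) → φ(x+1))`. -/
noncomputable def IsInductive (φ : OneVarFormula) : Prop :=
  PAminus ⊨ᵇ closeAll (substP φ zeroT) ∧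
    PAminus ⊨ᵇ closeAll (allX (φ ⟹ substX φ (addT xT oneT)))

/-- `φ(x)` is `<`-inductive: `PA⁻ ⊢ ∀y(∀x<y φ(x) → φ(y))`. -/
noncomputable def IsLtInductive (φ : OneVarFormula) : Prop :=
  PAminus ⊨ᵇ closeAll (allX (allLtX φ ⟹ φ))

/-- `φ(x)` is `(n+1)`-step inductive:
`PA⁻ ⊢ ⋀_{k<n+1} φ(k) ∧ ∀x(φ(x) → φ(x+n+1))`. -/
noncomputable def IsStepInductive (n : ℕ) (φ : OneVarFormula) : Prop :=
  PAminus ⊨ᵇ closeAll (conjNum φ (n + 1) ⊓ allX (φ ⟹ substX φ (addT xT (numT (n + 1)))))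

/-- `φ(x)` is `(n+1)`-inductive:
`PA⁻ ⊢ ⋀_{k<n+1} φ(k) ∧ ∀x(⋀_{k<n+1} φ(x+k) → φ(x+n+1))`. -/
noncomputable def IsKInductive (n : ℕ) (φ : OneVarFormula) : Prop :=
  PAminus ⊨ᵇ
    closeAll (conjNum φ (n + 1) ⊓ allX (conjShift φ (n + 1) ⟹ substX φ (addT xT (numT (n + 1)))))

/-- `φ(x)` is p-inductive (polynomially inductive):
`PA⁻ ⊢ φ(0) ∧ ∀x(φ(x) → φ(2x) ∧ φ(2x+1))`. -/
noncomputable def IsPInductive (φ : OneVarFormula) : Prop :=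
  PAminus ⊨ᵇ closeAll (substP φ zeroT ⊓
    allX (φ ⟹ substX φ (mulT twoT xT) ⊓ substX φ (addT (mulT twoT xT) oneT)))

/-! ### Cuts -/

/-- `φ(x)` is a cut: an inductive formula with `PA⁻ ⊢ ∀x∀y(x<y ∧ φ(y) → φ(x))`. -/
noncomputable def IsCut (φ : OneVarFormula) : Prop :=
  IsInductive φ ∧
    PAminus ⊨ᵇ closeAll
      (ltFml (Term.var (Sum.inr 0) : Lor.Term (Fin 0 ⊕ Fin 2)) (Term.var (Sum.inr 1)) ⊓
          φ.relabel (Sum.elim (fun i => Sum.inl i) fun _ => Sum.inr 1) ⟹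
        φ.relabel (Sum.elim (fun i => Sum.inl i) fun _ => Sum.inr 0))

/-- `φ(x)` is an a-cut: a cut with `PA⁻ ⊢ ∀x(φ(x) → φ(x+x))`. -/
noncomputable def IsACut (φ : OneVarFormula) : Prop :=
  IsCut φ ∧ PAminus ⊨ᵇ closeAll (allX (φ ⟹ substX φ (addT xT xT)))

/-- `φ(x)` is an am-cut: an a-cut with `PA⁻ ⊢ ∀x(φ(x) → φ(x×x))`. -/
noncomputable def IsAMCut (φ : OneVarFormula) : Prop :=
  IsACut φ ∧ PAminus ⊨ᵇ closeAll (allX (φ ⟹ substX φ (mulT xT xT)))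

/-- `PA⁻` plus `<`-induction for quantifier-free `L_OR` formulas. -/
noncomputable def IOpenLt : Lor.Theory :=
  PAminus ∪ {σ | ∃ (m : ℕ) (θ : Lor.Formula (Fin m ⊕ Fin 1)), θ.IsQF ∧ σ = indLtAx θ}

/-- `PA⁻` plus `(n+1)`-step induction for quantifier-free `L_OR` formulas. -/
noncomputable def IOpenStep (n : ℕ) : Lor.Theory :=
  PAminus ∪ {σ | ∃ (m : ℕ) (θ : Lor.Formula (Fin m ⊕ Fin 1)), θ.IsQF ∧ σ = indStepAx n θ}

/-- `PA⁻` plus `(n+1)`-induction for quantifier-free `L_OR` formulas. -/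
noncomputable def IOpenK (n : ℕ) : Lor.Theory :=
  PAminus ∪ {σ | ∃ (m : ℕ) (θ : Lor.Formula (Fin m ⊕ Fin 1)), θ.IsQF ∧ σ = indKAx n θ}


/-!
The four theories have the same models. Each of the other schemes yields ordinary induction for
the same formula, and ordinary open induction applied to `⋀_{k ≤ n} θ(x + k)` yields
`(n+1)`-induction, which trivially yields `(n+1)`-step induction. The real content is that `IOpen`
proves `<`-induction for open formulas.

Call `e` a switch point of a predicate `P` if `P e` and `P (e + 1)` differ. In a model of `IOpen`
terms are polynomials, so an open formula is a boolean combination of inequalities `q(x) < p(x)`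
and switches only where one of them does. If `p - q` has formal degree `d`, open induction finds
between two switch points of `q < p` a switch point of the forward difference, of degree `d - 1`;
hence `q < p`, and with it every open formula, has boundedly many switch points. But if an open
`θ` is `<`-progressive and fails at `b`, open induction puts a down-switch below every failure and
progressiveness puts a failure below every down-switch, giving arbitrarily many switch points.
-/

open Polynomial

section Operations

variable {M : Type} [Lor.Structure M]

instance : Zero M := ⟨Structure.funMap (L := Lor) LorFunc.zero ![]⟩
instance : One M := ⟨Structure.funMap (L := Lor) LorFunc.one ![]⟩
instance : Add M := ⟨fun a b => Structure.funMap (L := Lor) LorFunc.add ![a, b]⟩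
instance : Mul M := ⟨fun a b => Structure.funMap (L := Lor) LorFunc.mul ![a, b]⟩
instance : LT M := ⟨fun a b => Structure.RelMap (L := Lor) LorRel.lt ![a, b]⟩

@[simp] lemma realize_zeroT {α : Type} (v : α → M) : (zeroT).realize v = (0 : M) :=
  congrArg (Structure.funMap (L := Lor) _) (Subsingleton.elim _ _)

@[simp] lemma realize_oneT {α : Type} (v : α → M) : (oneT).realize v = (1 : M) :=
  congrArg (Structure.funMap (L := Lor) _) (Subsingleton.elim _ _)

@[simp] lemma realize_addT {α : Type} (v : α → M) (t u : Lor.Term α) :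
    (addT t u).realize v = t.realize v + u.realize v :=
  Term.realize_functions_apply₂

@[simp] lemma realize_mulT {α : Type} (v : α → M) (t u : Lor.Term α) :
    (mulT t u).realize v = t.realize v * u.realize v :=
  Term.realize_functions_apply₂

@[simp] lemma realize_ltBF {α : Type} {n : ℕ} (v : α → M) (xs : Fin n → M)
    (t u : Lor.Term (α ⊕ Fin n)) :
    (ltBF t u).Realize v xs ↔ t.realize (Sum.elim v xs) < u.realize (Sum.elim v xs) :=
  BoundedFormula.realize_rel₂

@[simp] lemma realize_ltFml {α : Type} (v : α → M) (t u : Lor.Term α) :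
    (ltFml t u).Realize v ↔ t.realize v < u.realize v :=
  Formula.realize_rel₂

lemma funMap_zero (r : Fin 0 → M) : Structure.funMap (L := Lor) LorFunc.zero r = 0 :=
  congrArg _ (Subsingleton.elim _ _)

lemma funMap_one (r : Fin 0 → M) : Structure.funMap (L := Lor) LorFunc.one r = 1 :=
  congrArg _ (Subsingleton.elim _ _)

lemma funMap_add (r : Fin 2 → M) : Structure.funMap (L := Lor) LorFunc.add r = r 0 + r 1 :=
  congrArg _ (FinVec.etaExpand_eq r).symm

lemma funMap_mul (r : Fin 2 → M) : Structure.funMap (L := Lor) LorFunc.mul r = r 0 * r 1 :=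
  congrArg _ (FinVec.etaExpand_eq r).symm

lemma relMap_lt (r : Fin 2 → M) : Structure.RelMap (L := Lor) LorRel.lt r ↔ r 0 < r 1 :=
  iff_of_eq (congrArg _ (FinVec.etaExpand_eq r).symm)

end Operations

namespace PAminus

variable {M : Type} [Lor.Structure M]

variable (M) in
structure Laws : Prop where
  add_assoc : ∀ a b c : M, a + b + c = a + (b + c)
  add_comm : ∀ a b : M, a + b = b + a
  mul_assoc : ∀ a b c : M, a * b * c = a * (b * c)
  mul_comm : ∀ a b : M, a * b = b * a
  left_distrib : ∀ a b c : M, a * (b + c) = a * b + a * c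
  add_zero : ∀ a : M, a + 0 = a
  mul_zero : ∀ a : M, a * 0 = 0
  mul_one : ∀ a : M, a * 1 = a
  lt_trans : ∀ a b c : M, a < b → b < c → a < c
  lt_irrefl : ∀ a : M, ¬ a < a
  lt_trichotomy : ∀ a b : M, (a < b ∨ a = b) ∨ b < a
  add_lt_add_right : ∀ a b c : M, a < b → a + c < b + c
  mul_lt_mul_right : ∀ a b c : M, c ≠ 0 → a < b → a * c < b * c
  lt_iff_exists_add_one : ∀ a b : M, a < b ↔ ∃ c, a + c + 1 = b
  zero_lt_one : (0 : M) < 1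
  zero_le : ∀ a : M, 0 < a ∨ 0 = a

variable [PAminus.Model M]

theorem laws : Laws M := by
  have h := (Theory.model_iff PAminus).mp (inferInstance : PAminus.Model M)
  simp [PAminus, Sentence.Realize, Formula.Realize, Fin.snoc] at h
  obtain ⟨h1, h2, h3, h4, h5, h6, h7, h8, h9, h10, h11, h12, h13, h14, ⟨h15, -⟩, h16⟩ := h
  exact ⟨h1, h2, h3, h4, h5, h6, h7, h8, h9, h10, h11, h12, h13, h14, h15, h16⟩

noncomputable instance : LinearOrder M where
  le a b := a < b ∨ a = b
  le_refl _ := Or.inr rfl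
  le_trans a b c := by
    rintro (hab | rfl) (hbc | rfl)
    exacts [Or.inl (laws.lt_trans a b c hab hbc), Or.inl hab, Or.inl hbc, Or.inr rfl]
  le_antisymm a b := by
    rintro (hab | rfl) (hba | hba)
    exacts [(laws.lt_irrefl a (laws.lt_trans a b a hab hba)).elim, hba.symm, rfl, rfl]
  le_total a b := by
    rcases laws.lt_trichotomy a b with (h | h) | h
    exacts [Or.inl (Or.inl h), Or.inl (Or.inr h), Or.inr (Or.inl h)]
  lt_iff_le_not_ge a b := by
    refine ⟨fun h => ⟨Or.inl h, ?_⟩, ?_⟩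
    · rintro (h' | rfl)
      exacts [laws.lt_irrefl a (laws.lt_trans a b a h h'), laws.lt_irrefl b h]
    · rintro ⟨hab | rfl, hba⟩
      exacts [hab, (hba (Or.inr rfl)).elim]
  toDecidableLE := Classical.decRel _

noncomputable instance : CommSemiring M where
  add_assoc := laws.add_assoc
  zero_add a := by rw [laws.add_comm]; exact laws.add_zero a
  add_zero := laws.add_zero
  add_comm := laws.add_comm
  nsmul := nsmulRec
  left_distrib := laws.left_distrib
  right_distrib a b c := by simp only [laws.mul_comm _ c, laws.left_distrib]
  zero_mul a := by rw [laws.mul_comm]; exact laws.mul_zero a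
  mul_zero := laws.mul_zero
  mul_assoc := laws.mul_assoc
  mul_comm := laws.mul_comm
  one_mul a := by rw [laws.mul_comm]; exact laws.mul_one a
  mul_one := laws.mul_one
  npow := npowRec

instance : IsStrictOrderedRing M where
  add_le_add_left a b := by
    rintro (h | rfl) c
    exacts [Or.inl (laws.add_lt_add_right a b c h), le_rfl]
  le_of_add_le_add_left a b c := by
    contrapose!
    intro h
    simpa only [add_comm a] using laws.add_lt_add_right c b a h
  zero_le_one := Or.inl laws.zero_lt_one
  exists_pair_ne := ⟨0, 1, laws.zero_lt_one.ne⟩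
  mul_lt_mul_of_pos_left a ha b c hbc := by
    simpa only [mul_comm a] using laws.mul_lt_mul_right b c a ha.ne' hbc
  mul_lt_mul_of_pos_right a ha b c hbc := laws.mul_lt_mul_right b c a ha.ne' hbc

instance : CanonicallyOrderedAdd M where
  exists_add_of_le := by
    rintro a b (h | rfl)
    · obtain ⟨c, rfl⟩ := (laws.lt_iff_exists_add_one a b).mp h
      exact ⟨c + 1, add_assoc a c 1⟩
    · exact ⟨0, (add_zero a).symm⟩
  le_add_self a b := by simpa using add_le_add_right (laws.zero_le b : 0 ≤ b) a
  le_self_add a b := by simpa using add_le_add_left (laws.zero_le b : 0 ≤ b) a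

lemma add_one_le_of_lt {a b : M} (h : a < b) : a + 1 ≤ b := by
  obtain ⟨c, rfl⟩ := (laws.lt_iff_exists_add_one a b).mp h
  rw [add_right_comm]
  exact le_self_add

lemma lt_add_one_iff {a b : M} : a < b + 1 ↔ a ≤ b :=
  ⟨fun h => le_of_add_le_add_right (add_one_le_of_lt h), fun h => h.trans_lt (lt_add_one b)⟩

end PAminus

section Numerals

variable {M : Type} [Lor.Structure M] [PAminus.Model M]

@[simp] lemma realize_numT {α : Type} (v : α → M) (k : ℕ) : (numT k).realize v = (k : M) := by
  induction k with
  | zero => simp [numT]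
  | succ k ih => simp [numT, ih]

lemma realize_leFml {α : Type} (v : α → M) (t u : Lor.Term α) :
    (leFml t u).Realize v ↔ t.realize v ≤ u.realize v := by
  simp [leFml, le_iff_lt_or_eq]

end Numerals

theorem realize_iAllsOld {L : Language} {M : Type*} [L.Structure M] {α β γ : Type*}
    [Finite γ] {f : α → β ⊕ γ} {φ : L.Formula α} {v : β → M} :
    (iAllsOld f φ).Realize v ↔ ∀ i : γ → M, φ.Realize fun a => Sum.elim v i (f a) := by
  let e := Classical.choice (Classical.choose_spec (Finite.exists_equiv_fin γ))
  rw [iAllsOld]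
  simp only [Nat.add_zero, BoundedFormula.realize_alls, BoundedFormula.realize_relabel,
    Function.comp_def, Fin.castAdd_zero, Sum.elim_map, id_eq]
  refine Equiv.forall_congr ⟨fun v => v ∘ e, fun v => v ∘ e.symm, fun _ => by
    simp [Function.comp_def], fun _ => by simp [Function.comp_def]⟩ fun x => ?_
  rw [Formula.Realize, iff_iff_eq]
  congr
  funext i
  exact i.elim0

lemma forall_fin_one_fun {α : Type*} {P : (Fin 1 → α) → Prop} :
    (∀ i, P i) ↔ ∀ y : α, P fun _ => y := by
  refine ⟨fun h y => h _, fun h i => ?_⟩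
  have hi : i = fun _ => i 0 := funext fun j => congrArg i (Subsingleton.elim j 0)
  exact hi ▸ h (i 0)

section Realize

variable {M : Type} [Lor.Structure M] {m : ℕ}

def valX (z : Fin m → M) (x : M) : Fin m ⊕ Fin 1 → M := Sum.elim z fun _ => x

@[simp] lemma realize_xT (z : Fin m → M) (x : M) : xT.realize (valX z x) = x := rfl

lemma realize_closeAll {α : Type} [Finite α] (φ : Lor.Formula α) :
    M ⊨ closeAll φ ↔ ∀ v : α → M, φ.Realize v :=
  realize_iAllsOld

lemma realize_allX (θ : Lor.Formula (Fin m ⊕ Fin 1)) (z : Fin m → M) :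
    (allX θ).Realize z ↔ ∀ x : M, θ.Realize (valX z x) := by
  rw [allX, realize_iAllsOld, forall_fin_one_fun]
  rfl

lemma realize_subst_elim {β : Type} (θ : Lor.Formula (Fin m ⊕ Fin 1))
    (f : Fin m → Lor.Term β) (t : Lor.Term β) (v : β → M) :
    Formula.Realize (θ.subst (Sum.elim f fun _ => t)) v ↔
      θ.Realize (valX (fun i => (f i).realize v) (t.realize v)) := by
  refine BoundedFormula.realize_subst.trans (iff_of_eq (congrArg θ.Realize (funext ?_)))
  rintro (i | i) <;> rfl

lemma realize_substX (θ : Lor.Formula (Fin m ⊕ Fin 1)) (t : Lor.Term (Fin m ⊕ Fin 1))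
    (z : Fin m → M) (x : M) :
    (substX θ t).Realize (valX z x) ↔ θ.Realize (valX z (t.realize (valX z x))) :=
  realize_subst_elim _ _ _ _

lemma realize_substP (θ : Lor.Formula (Fin m ⊕ Fin 1)) (t : Lor.Term (Fin m)) (z : Fin m → M) :
    (substP θ t).Realize z ↔ θ.Realize (valX z (t.realize z)) :=
  realize_subst_elim _ _ _ _

lemma realize_allLtX (θ : Lor.Formula (Fin m ⊕ Fin 1)) (z : Fin m → M) (x : M) :
    (allLtX θ).Realize (valX z x) ↔ ∀ y < x, θ.Realize (valX z y) := by
  rw [allLtX, realize_iAllsOld, forall_fin_one_fun]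
  refine forall_congr' fun y => ?_
  simp only [Formula.realize_imp, realize_ltFml, Formula.realize_relabel]
  refine imp_congr Iff.rfl (iff_of_eq (congrArg θ.Realize (funext ?_)))
  rintro (i | i) <;> rfl

variable [PAminus.Model M]

lemma realize_conjNum (θ : Lor.Formula (Fin m ⊕ Fin 1)) (j : ℕ) (z : Fin m → M) :
    (conjNum θ j).Realize z ↔ ∀ k < j, θ.Realize (valX z (k : M)) := by
  induction j with
  | zero => simp [conjNum]
  | succ j ih =>
    simp only [conjNum, Formula.realize_inf, ih, realize_substP, realize_numT,
      Nat.forall_lt_succ_right]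

lemma realize_conjShift (θ : Lor.Formula (Fin m ⊕ Fin 1)) (j : ℕ) (z : Fin m → M) (x : M) :
    (conjShift θ j).Realize (valX z x) ↔ ∀ k < j, θ.Realize (valX z (x + k)) := by
  induction j with
  | zero => simp [conjShift]
  | succ j ih =>
    simp only [conjShift, Formula.realize_inf, ih, realize_substX, realize_addT,
      realize_numT, Nat.forall_lt_succ_right]
    rfl

end Realize

section Principles

variable {M : Type} [Lor.Structure M]

def IndPrinciple (P : M → Prop) : Prop :=
  P 0 → (∀ x, P x → P (x + 1)) → ∀ x, P x

def LtIndPrinciple (P : M → Prop) : Prop :=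
  (∀ y, (∀ x < y, P x) → P y) → ∀ x, P x

variable {m : ℕ} (θ : Lor.Formula (Fin m ⊕ Fin 1))

lemma realize_indAx :
    M ⊨ indAx θ ↔ ∀ z : Fin m → M, IndPrinciple fun x => θ.Realize (valX z x) := by
  simp [indAx, IndPrinciple, realize_closeAll, realize_allX, realize_substP, realize_substX]

lemma realize_indLtAx :
    M ⊨ indLtAx θ ↔ ∀ z : Fin m → M, LtIndPrinciple fun x => θ.Realize (valX z x) := by
  simp [indLtAx, LtIndPrinciple, realize_closeAll, realize_allX, realize_allLtX]

variable [PAminus.Model M]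

def StepIndPrinciple (n : ℕ) (P : M → Prop) : Prop :=
  (∀ k < n + 1, P k) → (∀ x, P x → P (x + (n + 1 : ℕ))) → ∀ x, P x

def KIndPrinciple (n : ℕ) (P : M → Prop) : Prop :=
  (∀ k < n + 1, P k) → (∀ x, (∀ k < n + 1, P (x + k)) → P (x + (n + 1 : ℕ))) →
    ∀ x, P x

lemma realize_indStepAx (n : ℕ) :
    M ⊨ indStepAx n θ ↔
      ∀ z : Fin m → M, StepIndPrinciple n fun x => θ.Realize (valX z x) := by
  simp [indStepAx, StepIndPrinciple, realize_closeAll, realize_allX, realize_conjNum,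
    realize_substX]

lemma realize_indKAx (n : ℕ) :
    M ⊨ indKAx n θ ↔ ∀ z : Fin m → M, KIndPrinciple n fun x => θ.Realize (valX z x) := by
  simp [indKAx, KIndPrinciple, realize_closeAll, realize_allX, realize_conjNum,
    realize_conjShift, realize_substX]

end Principles

section EasyImplications

variable {M : Type} [Lor.Structure M] [PAminus.Model M] {P : M → Prop}

lemma LtIndPrinciple.indPrinciple (h : LtIndPrinciple P) : IndPrinciple P := by
  intro h0 hs
  refine h fun y hy => ?_
  rcases eq_zero_or_pos y with rfl | hpos
  · exact h0
  · obtain ⟨w, rfl⟩ := exists_add_of_le (PAminus.add_one_le_of_lt hpos)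
    rw [zero_add, add_comm] at hy ⊢
    exact hs w (hy w (lt_add_one w))

lemma add_nat_of_forall_add_one (hs : ∀ x, P x → P (x + 1)) {x : M} (hx : P x) (k : ℕ) :
    P (x + k) := by
  induction k with
  | zero => simpa using hx
  | succ k ih => simpa [← add_assoc] using hs _ ih

lemma StepIndPrinciple.indPrinciple {n : ℕ} (h : StepIndPrinciple n P) : IndPrinciple P :=
  fun h0 hs => h (fun k _ => by simpa using add_nat_of_forall_add_one hs h0 k)
    fun x hx => add_nat_of_forall_add_one hs hx (n + 1)

lemma KIndPrinciple.stepIndPrinciple {n : ℕ} (h : KIndPrinciple n P) : StepIndPrinciple n P :=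
  fun hbase hs => h hbase fun x hx => hs x (by simpa using hx 0 n.succ_pos)

lemma IndPrinciple.kIndPrinciple {n : ℕ} (h : IndPrinciple fun x => ∀ k < n + 1, P (x + k)) :
    KIndPrinciple n P := by
  intro hbase hs x
  have hx := h (by simpa using hbase) (fun y hy k hk => ?_) x 0 n.succ_pos
  · simpa using hx
  rw [add_assoc, add_comm 1, ← Nat.cast_add_one]
  rcases Nat.lt_succ_iff_lt_or_eq.mp hk with hk | rfl
  · exact hy (k + 1) (by omega)
  · exact hs y hy

end EasyImplications

theorem FirstOrder.Language.BoundedFormula.IsQF.subst {L : Language} {α β : Type*} {n : ℕ}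
    {φ : L.BoundedFormula α n} (h : φ.IsQF) (f : α → L.Term β) : (φ.subst f).IsQF := by
  induction h with
  | falsum => exact isQF_bot
  | of_isAtomic h =>
    cases h with
    | equal t₁ t₂ => exact (IsAtomic.equal _ _).isQF
    | rel R ts => exact (IsAtomic.rel _ _).isQF
  | imp _ _ ih₁ ih₂ => exact ih₁.imp ih₂

section Definable

variable {M : Type} [Lor.Structure M]

def IsOpenDefinable (P : M → Prop) : Prop :=
  ∃ (m : ℕ) (θ : Lor.Formula (Fin m ⊕ Fin 1)) (z : Fin m → M),
    θ.IsQF ∧ ∀ x, P x ↔ θ.Realize (valX z x)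

lemma isOpenDefinable_realize {m : ℕ} {θ : Lor.Formula (Fin m ⊕ Fin 1)} (hθ : θ.IsQF)
    (z : Fin m → M) : IsOpenDefinable fun x => θ.Realize (valX z x) :=
  ⟨m, θ, z, hθ, fun _ => Iff.rfl⟩

lemma IsOpenDefinable.indPrinciple [IOpen.Model M] {P : M → Prop} (hP : IsOpenDefinable P) :
    IndPrinciple P := by
  obtain ⟨m, θ, z, hθ, hPθ⟩ := hP
  obtain rfl : P = fun x => θ.Realize (valX z x) := funext fun x => propext (hPθ x)
  exact (realize_indAx θ).mp (IOpen.realize_sentence_of_mem (Or.inr ⟨m, θ, hθ, rfl⟩)) z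

lemma IsOpenDefinable.not {P : M → Prop} (hP : IsOpenDefinable P) :
    IsOpenDefinable fun x => ¬P x := by
  obtain ⟨m, θ, z, hθ, hPθ⟩ := hP
  exact ⟨m, θ.not, z, hθ.not, fun x => by simp [hPθ]⟩

variable [PAminus.Model M]

lemma IsOpenDefinable.forall_lt_add {P : M → Prop} (hP : IsOpenDefinable P) (j : ℕ) :
    IsOpenDefinable fun x => ∀ k < j, P (x + k) := by
  obtain ⟨m, θ, z, hθ, hPθ⟩ := hP
  refine ⟨m, conjShift θ j, z, ?_, fun x => by simp only [hPθ, realize_conjShift]⟩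
  induction j with
  | zero => exact BoundedFormula.IsQF.top
  | succ j ih => exact ih.inf (hθ.subst _)

lemma IsOpenDefinable.imp_of_add_le {P : M → Prop} (hP : IsOpenDefinable P) (u v : M) :
    IsOpenDefinable fun x => u + x ≤ v → P (u + x) := by
  obtain ⟨m, θ, z, hθ, hPθ⟩ := hP
  let U : Lor.Term (Fin (m + 2) ⊕ Fin 1) := var (Sum.inl (Fin.last m).castSucc)
  let V : Lor.Term (Fin (m + 2) ⊕ Fin 1) := var (Sum.inl (Fin.last (m + 1)))
  refine ⟨m + 2, leFml (addT U xT) V ⟹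
      θ.subst (Sum.elim (fun i => var (Sum.inl i.castSucc.castSucc)) fun _ => addT U xT),
    Fin.snoc (Fin.snoc z u) v,
    ((BoundedFormula.IsAtomic.rel _ _).isQF.sup (BoundedFormula.IsAtomic.equal _ _).isQF).imp
      (hθ.subst _), fun x => ?_⟩
  simp [U, V, hPθ, realize_leFml, realize_subst_elim, valX, xT]

def hornerT {α : Type} (x : Lor.Term α) : (k : ℕ) → (Fin k → Lor.Term α) → Lor.Term α
  | 0, _ => zeroT
  | k + 1, c => addT (c 0) (mulT x (hornerT x k fun i => c i.succ))

lemma realize_hornerT {α : Type} (v : α → M) (x : Lor.Term α) (k : ℕ)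
    (c : Fin k → Lor.Term α) :
    (hornerT x k c).realize v = ∑ i, (c i).realize v * x.realize v ^ (i : ℕ) := by
  induction k with
  | zero => simp [hornerT]
  | succ k ih =>
    simp [hornerT, ih, Fin.sum_univ_succ, Finset.mul_sum, pow_succ', mul_left_comm]

lemma eval_eq_sum_fin {R : Type*} [Semiring R] {p : R[X]} {k : ℕ} (hk : p.natDegree < k) (x : R) :
    p.eval x = ∑ i : Fin k, p.coeff i * x ^ (i : ℕ) := by
  rw [eval_eq_sum_range' hk, Fin.sum_univ_eq_sum_range (fun i => p.coeff i * x ^ i)]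

lemma isOpenDefinable_eval_lt (p q : M[X]) : IsOpenDefinable fun x => q.eval x < p.eval x := by
  set k := max p.natDegree q.natDegree + 1
  refine ⟨k + k, ltFml (hornerT xT k fun i => var (Sum.inl (Fin.natAdd k i)))
      (hornerT xT k fun i => var (Sum.inl (Fin.castAdd k i))),
    Fin.append (fun i => p.coeff i) (fun i => q.coeff i),
    (BoundedFormula.IsAtomic.rel _ _).isQF, fun x => ?_⟩
  dsimp only
  rw [realize_ltFml, realize_hornerT, realize_hornerT, eval_eq_sum_fin (k := k) (by omega),
    eval_eq_sum_fin (k := k) (by omega)]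
  simp only [xT, Term.realize_var, valX, Sum.elim_inl, Sum.elim_inr, Fin.append_left,
    Fin.append_right]

end Definable

section Switches

variable {M : Type} [Add M] [One M] {P Q : M → Prop}

def IsSwitch (P : M → Prop) (e : M) : Prop := Xor (P e) (P (e + 1))

def HasBoundedSwitches (P : M → Prop) : Prop :=
  ∃ N : ℕ, ∀ S : Finset M, (∀ e ∈ S, IsSwitch P e) → S.card ≤ N

lemma hasBoundedSwitches_const (p : Prop) : HasBoundedSwitches fun _ : M => p :=
  ⟨0, fun S hS => by
    simp [IsSwitch] at hS
    simp [Finset.eq_empty_of_forall_notMem hS]⟩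

lemma HasBoundedSwitches.comp₂ (c : Prop → Prop → Prop) (hP : HasBoundedSwitches P)
    (hQ : HasBoundedSwitches Q) : HasBoundedSwitches fun x => c (P x) (Q x) := by
  classical
  obtain ⟨N₁, hN₁⟩ := hP
  obtain ⟨N₂, hN₂⟩ := hQ
  refine ⟨N₁ + N₂, fun S hS => ?_⟩
  have hsub : S ⊆ S.filter (IsSwitch P) ∪ S.filter (IsSwitch Q) := by
    intro e he
    by_contra hne
    simp only [Finset.mem_union, Finset.mem_filter, he, true_and, not_or, IsSwitch,
      not_xor] at hne
    have := hS e he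
    rw [IsSwitch, propext hne.1, propext hne.2, xor_self] at this
    exact this
  calc S.card ≤ (S.filter (IsSwitch P) ∪ S.filter (IsSwitch Q)).card := Finset.card_le_card hsub
    _ ≤ (S.filter (IsSwitch P)).card + (S.filter (IsSwitch Q)).card := Finset.card_union_le _ _
    _ ≤ N₁ + N₂ := add_le_add (hN₁ _ fun e he => (Finset.mem_filter.mp he).2)
        (hN₂ _ fun e he => (Finset.mem_filter.mp he).2)

lemma HasBoundedSwitches.congr (hP : HasBoundedSwitches P) (h : ∀ x, P x ↔ Q x) :
    HasBoundedSwitches Q :=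
  funext (fun x => propext (h x)) ▸ hP

end Switches

instance {M : Type} [Lor.Structure M] [IOpen.Model M] : PAminus.Model M :=
  Theory.Model.mono ‹_› Set.subset_union_left

section Boundary

variable {M : Type} [Lor.Structure M] [IOpen.Model M] {P : M → Prop}

lemma IsOpenDefinable.exists_down_switch (hP : IsOpenDefinable P) {u v : M} (huv : u ≤ v)
    (hu : P u) (hv : ¬P v) : ∃ w, u ≤ w ∧ w < v ∧ P w ∧ ¬P (w + 1) := by
  by_contra! hsw
  have hind := (hP.imp_of_add_le u v).indPrinciple (fun _ => by simpa using hu) fun x hx hle => ?_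
  · obtain ⟨c, rfl⟩ := exists_add_of_le huv
    exact hv (hind c le_rfl)
  have hlt : u + x < v := lt_of_lt_of_le (by simp [← add_assoc]) hle
  rw [← add_assoc]
  exact hsw (u + x) le_self_add hlt (hx hlt.le)

lemma IsOpenDefinable.exists_up_switch (hP : IsOpenDefinable P) {u v : M} (huv : u ≤ v)
    (hu : ¬P u) (hv : P v) : ∃ w, u ≤ w ∧ w < v ∧ ¬P w ∧ P (w + 1) := by
  simpa using hP.not.exists_down_switch huv hu (not_not.mpr hv)

lemma IsOpenDefinable.exists_isSwitch (hP : IsOpenDefinable P) {u v : M} (huv : u ≤ v)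
    (h : ¬(P u ↔ P v)) : ∃ w, u ≤ w ∧ w < v ∧ IsSwitch P w := by
  by_cases hu : P u
  · obtain ⟨w, huw, hwv, hw, hw'⟩ := hP.exists_down_switch huv hu (by tauto)
    exact ⟨w, huw, hwv, Or.inl ⟨hw, hw'⟩⟩
  · obtain ⟨w, huw, hwv, hw, hw'⟩ := hP.exists_up_switch huv hu (by tauto)
    exact ⟨w, huw, hwv, Or.inr ⟨hw', hw⟩⟩

end Boundary

section ForwardDifference

variable {R : Type*} [CommSemiring R]

/- Without subtraction, a polynomial `p - q` is handled as the pair `(p, q)`: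
`CoeffsAgreeAbove d p q` says that it has degree at most `d`, and its forward difference
`(p - q)(X + 1) - (p - q)` is `fwdDiffPos p q - fwdDiffNeg p q`. -/
def CoeffsAgreeAbove (d : ℕ) (p q : R[X]) : Prop := ∀ i, d < i → p.coeff i = q.coeff i

lemma coeffsAgreeAbove_of_natDegree_le {d : ℕ} {p q : R[X]} (hp : p.natDegree ≤ d)
    (hq : q.natDegree ≤ d) : CoeffsAgreeAbove d p q := fun i hi => by
  rw [coeff_eq_zero_of_natDegree_lt (hp.trans_lt hi),
    coeff_eq_zero_of_natDegree_lt (hq.trans_lt hi)]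

noncomputable def fwdDiffPos (p q : R[X]) : R[X] := p.comp (X + 1) + q

noncomputable def fwdDiffNeg (p q : R[X]) : R[X] := q.comp (X + 1) + p

lemma coeff_comp_X_add_one (p : R[X]) {N : ℕ} (hN : p.natDegree < N) (i : ℕ) :
    (p.comp (X + 1)).coeff i = ∑ j ∈ Finset.range N, p.coeff j * (j.choose i : R) := by
  rw [comp_eq_sum_left, coeff_sum, sum_over_range' p (fun n => by simp) N hN]
  exact Finset.sum_congr rfl fun j _ => by rw [coeff_C_mul, coeff_X_add_one_pow]

lemma CoeffsAgreeAbove.fwdDiff {d : ℕ} {p q : R[X]} (h : CoeffsAgreeAbove (d + 1) p q) :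
    CoeffsAgreeAbove d (fwdDiffPos p q) (fwdDiffNeg p q) := by
  intro i hi
  set N := max (max p.natDegree q.natDegree) i + 1
  have hiN : i ∈ Finset.range N := Finset.mem_range.mpr (by omega)
  have htail : ∑ j ∈ (Finset.range N).erase i, p.coeff j * (j.choose i : R) =
      ∑ j ∈ (Finset.range N).erase i, q.coeff j * (j.choose i : R) := by
    refine Finset.sum_congr rfl fun j hj => ?_
    rcases (Finset.ne_of_mem_erase hj).lt_or_gt with hji | hji
    · simp [Nat.choose_eq_zero_of_lt hji]
    · rw [h j (by omega)]
  simp only [fwdDiffPos, fwdDiffNeg, coeff_add]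
  rw [coeff_comp_X_add_one p (N := N) (by omega), coeff_comp_X_add_one q (N := N) (by omega),
    ← Finset.add_sum_erase _ _ hiN, ← Finset.add_sum_erase _ _ hiN, htail]
  simp only [Nat.choose_self, Nat.cast_one, mul_one]
  ring

lemma eval_fwdDiff_lt_iff [LT R] (p q : R[X]) (x : R) :
    (fwdDiffNeg p q).eval x < (fwdDiffPos p q).eval x ↔
      q.eval (x + 1) + p.eval x < p.eval (x + 1) + q.eval x := by
  simp [fwdDiffPos, fwdDiffNeg, eval_comp]

variable [LinearOrder R] [IsOrderedCancelAddMonoid R]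

lemma CoeffsAgreeAbove.eval_lt_iff {p q : R[X]} (h : CoeffsAgreeAbove 0 p q) (x : R) :
    q.eval x < p.eval x ↔ q.coeff 0 < p.coeff 0 := by
  set N := max p.natDegree q.natDegree
  rw [eval_eq_sum_range' (n := N + 1) (by omega), eval_eq_sum_range' (n := N + 1) (by omega),
    Finset.sum_range_succ', Finset.sum_range_succ',
    Finset.sum_congr rfl fun i _ => by rw [← h (i + 1) i.succ_pos] ]
  simp

lemma fwdDiff_pos_of_up {p q : R[X]} {e : R} (h : ¬q.eval e < p.eval e)
    (h' : q.eval (e + 1) < p.eval (e + 1)) :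
    (fwdDiffNeg p q).eval e < (fwdDiffPos p q).eval e :=
  (eval_fwdDiff_lt_iff p q e).mpr (add_lt_add_of_lt_of_le h' (not_lt.mp h))

lemma fwdDiff_not_pos_of_down {p q : R[X]} {e : R} (h : q.eval e < p.eval e)
    (h' : ¬q.eval (e + 1) < p.eval (e + 1)) :
    ¬(fwdDiffNeg p q).eval e < (fwdDiffPos p q).eval e := by
  rw [eval_fwdDiff_lt_iff, not_lt]
  exact (add_lt_add_of_le_of_lt (not_lt.mp h') h).le

end ForwardDifference

section SwitchBound

variable {M : Type} [Lor.Structure M] [IOpen.Model M]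

/- Up-switches of `q < p` are points where the forward difference is positive, down-switches
points where it is not, and two switches of the same kind enclose one of the other kind. -/
lemma exists_fwdDiff_switch_between {p q : M[X]} {e e' : M}
    (he : IsSwitch (fun x => q.eval x < p.eval x) e)
    (he' : IsSwitch (fun x => q.eval x < p.eval x) e') (hlt : e < e') :
    ∃ w, e ≤ w ∧ w < e' ∧
      IsSwitch (fun x => (fwdDiffNeg p q).eval x < (fwdDiffPos p q).eval x) w := by
  have hS := isOpenDefinable_eval_lt p q
  have hD := isOpenDefinable_eval_lt (fwdDiffPos p q) (fwdDiffNeg p q)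
  have he1 : e + 1 ≤ e' := PAminus.add_one_le_of_lt hlt
  rcases he with ⟨hd, hd'⟩ | ⟨hu, hu'⟩ <;> rcases he' with ⟨hd2, hd2'⟩ | ⟨hu2, hu2'⟩
  · obtain ⟨w₀, hw₀, hw₀e', hw, hw'⟩ := hS.exists_up_switch he1 hd' hd2
    obtain ⟨w, hew, hww₀, hsw⟩ := hD.exists_isSwitch (le_self_add.trans hw₀)
      fun h => fwdDiff_not_pos_of_down hd hd' (h.mpr (fwdDiff_pos_of_up hw hw'))
    exact ⟨w, hew, hww₀.trans hw₀e', hsw⟩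
  · exact hD.exists_isSwitch hlt.le
      fun h => fwdDiff_not_pos_of_down hd hd' (h.mpr (fwdDiff_pos_of_up hu2' hu2))
  · exact hD.exists_isSwitch hlt.le
      fun h => fwdDiff_not_pos_of_down hd2 hd2' (h.mp (fwdDiff_pos_of_up hu' hu))
  · obtain ⟨w₀, hw₀, hw₀e', hw, hw'⟩ := hS.exists_down_switch he1 hu hu2'
    obtain ⟨w, hew, hww₀, hsw⟩ := hD.exists_isSwitch (le_self_add.trans hw₀)
      fun h => fwdDiff_not_pos_of_down hw hw' (h.mp (fwdDiff_pos_of_up hu' hu))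
    exact ⟨w, hew, hww₀.trans hw₀e', hsw⟩

theorem not_forall_isSwitch_of_strictMono (d : ℕ) :
    ∀ p q : M[X], CoeffsAgreeAbove d p q → ∀ e : Fin (d + 1) → M, StrictMono e →
      ¬∀ i, IsSwitch (fun x => q.eval x < p.eval x) (e i) := by
  induction d with
  | zero =>
    intro p q h e _ hsw
    have := hsw 0
    rw [IsSwitch, h.eval_lt_iff, h.eval_lt_iff, xor_self] at this
    exact this
  | succ d ih =>
    intro p q h e he hsw
    choose w hew hwe hsw' using fun i : Fin (d + 1) =>
      exists_fwdDiff_switch_between (hsw i.castSucc) (hsw i.succ) (he i.castSucc_lt_succ)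
    refine ih _ _ h.fwdDiff w (fun i j hij => ?_) hsw'
    calc w i < e i.succ := hwe i
      _ ≤ e j.castSucc := he.monotone (Fin.succ_le_castSucc_iff.mpr hij)
      _ ≤ w j := hew j

lemma hasBoundedSwitches_eval_lt (p q : M[X]) :
    HasBoundedSwitches fun x => q.eval x < p.eval x := by
  refine ⟨max p.natDegree q.natDegree, fun S hS => ?_⟩
  by_contra! hcard
  exact not_forall_isSwitch_of_strictMono _ p q
    (coeffsAgreeAbove_of_natDegree_le (le_max_left _ _) (le_max_right _ _))
    (fun i => S.orderEmbOfFin rfl (Fin.castLE hcard i))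
    ((S.orderEmbOfFin rfl).strictMono.comp (Fin.strictMono_castLE hcard))
    fun i => hS _ (S.orderEmbOfFin_mem rfl _)

end SwitchBound

section OpenFormulas

variable {M : Type} [Lor.Structure M] [PAminus.Model M]

lemma exists_polynomial_realize_eq {m : ℕ} (z : Fin m → M)
    (t : Lor.Term ((Fin m ⊕ Fin 1) ⊕ Fin 0)) :
    ∃ p : M[X], ∀ x, t.realize (Sum.elim (valX z x) default) = p.eval x := by
  induction t with
  | var a =>
    rcases a with (i | _) | k
    · exact ⟨C (z i), fun x => by simp [valX]⟩
    · exact ⟨X, fun x => by simp [valX]⟩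
    · exact k.elim0
  | func f ts ih =>
    choose p hp using ih
    cases f with
    | zero => exact ⟨0, fun x => (funMap_zero _).trans eval_zero.symm⟩
    | one => exact ⟨1, fun x => (funMap_one _).trans eval_one.symm⟩
    | add => exact ⟨p 0 + p 1, fun x => (funMap_add _).trans (by simp only [hp, eval_add])⟩
    | mul => exact ⟨p 0 * p 1, fun x => (funMap_mul _).trans (by simp only [hp, eval_mul])⟩

end OpenFormulas

section OpenLeastNumber

variable {M : Type} [Lor.Structure M] [IOpen.Model M]

lemma hasBoundedSwitches_of_isQF {m : ℕ} {θ : Lor.Formula (Fin m ⊕ Fin 1)} (hθ : θ.IsQF)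
    (z : Fin m → M) : HasBoundedSwitches fun x => θ.Realize (valX z x) := by
  induction hθ with
  | falsum => exact hasBoundedSwitches_const False
  | of_isAtomic h =>
    cases h with
    | equal t₁ t₂ =>
      obtain ⟨p₁, hp₁⟩ := exists_polynomial_realize_eq z t₁
      obtain ⟨p₂, hp₂⟩ := exists_polynomial_realize_eq z t₂
      refine ((hasBoundedSwitches_eval_lt p₁ p₂).comp₂ (fun a b => ¬a ∧ ¬b)
        (hasBoundedSwitches_eval_lt p₂ p₁)).congr fun x => ?_
      simp only [Formula.Realize, BoundedFormula.realize_bdEqual, hp₁, hp₂, not_lt]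
      exact le_antisymm_iff.symm
    | rel R ts =>
      cases R
      obtain ⟨p₀, hp₀⟩ := exists_polynomial_realize_eq z (ts 0)
      obtain ⟨p₁, hp₁⟩ := exists_polynomial_realize_eq z (ts 1)
      refine (hasBoundedSwitches_eval_lt p₁ p₀).congr fun x => ?_
      exact ((relMap_lt _).trans (by rw [hp₀, hp₁])).symm
  | imp _ _ ih₁ ih₂ => exact ih₁.comp₂ (· → ·) ih₂

lemma IsOpenDefinable.hasBoundedSwitches {P : M → Prop} (hP : IsOpenDefinable P) :
    HasBoundedSwitches P := by
  obtain ⟨m, θ, z, hθ, hPθ⟩ := hP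
  exact (hasBoundedSwitches_of_isQF hθ z).congr fun x => (hPθ x).symm

lemma IsOpenDefinable.ltIndPrinciple {P : M → Prop} (hP : IsOpenDefinable P) :
    LtIndPrinciple P := by
  intro hprog b
  by_contra hb
  obtain ⟨N, hN⟩ := hP.hasBoundedSwitches
  have h0 : P 0 := hprog 0 fun x hx => (not_lt_zero hx).elim
  have key : ∀ k : ℕ, ∃ S : Finset M, S.card = k ∧ (∀ e ∈ S, IsSwitch P e) ∧
      ∃ f, ¬P f ∧ ∀ e ∈ S, f ≤ e := by
    intro k
    induction k with
    | zero => exact ⟨∅, rfl, by simp, b, hb, by simp⟩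
    | succ k ih =>
      obtain ⟨S, hcard, hsw, f, hf, hfS⟩ := ih
      obtain ⟨w, -, hwf, hw, hw1⟩ := hP.exists_down_switch zero_le h0 hf
      obtain ⟨f', hf'w, hf'⟩ : ∃ f' < w + 1, ¬P f' := by
        by_contra! h
        exact hw1 (hprog _ h)
      have hwS : w ∉ S := fun h => (hwf.trans_le (hfS w h)).false
      refine ⟨insert w S, by rw [Finset.card_insert_of_notMem hwS, hcard], ?_, f', hf', ?_⟩
      · simpa [Finset.forall_mem_insert] using ⟨Or.inl ⟨hw, hw1⟩, hsw⟩
      · have hf'w : f' ≤ w := PAminus.lt_add_one_iff.mp hf'w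
        simpa [Finset.forall_mem_insert] using
          ⟨hf'w, fun e he => hf'w.trans (hwf.le.trans (hfS e he))⟩
  obtain ⟨S, hcard, hsw, -⟩ := key (N + 1)
  have := hN S hsw
  omega

end OpenLeastNumber

section Theories

variable {M : Type} [Lor.Structure M]

lemma model_paminus_union_iff (ax : (m : ℕ) → Lor.Formula (Fin m ⊕ Fin 1) → Lor.Sentence) :
    (PAminus ∪
        {σ | ∃ (m : ℕ) (θ : Lor.Formula (Fin m ⊕ Fin 1)), θ.IsQF ∧ σ = ax m θ}).Model M ↔
      PAminus.Model M ∧ ∀ m (θ : Lor.Formula (Fin m ⊕ Fin 1)), θ.IsQF → M ⊨ ax m θ := by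
  simp only [Theory.model_iff, Set.mem_union, Set.mem_ofPred_eq, or_imp, forall_and]
  refine and_congr_right fun _ => ⟨fun h m θ hθ => h _ ⟨m, θ, hθ, rfl⟩, ?_⟩
  rintro h _ ⟨m, θ, hθ, rfl⟩
  exact h m θ hθ

lemma model_IOpen_iff : IOpen.Model M ↔
    PAminus.Model M ∧ ∀ m (θ : Lor.Formula (Fin m ⊕ Fin 1)), θ.IsQF → M ⊨ indAx θ :=
  model_paminus_union_iff fun _ θ => indAx θ

lemma model_IOpenLt_iff : IOpenLt.Model M ↔
    PAminus.Model M ∧ ∀ m (θ : Lor.Formula (Fin m ⊕ Fin 1)), θ.IsQF → M ⊨ indLtAx θ :=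
  model_paminus_union_iff fun _ θ => indLtAx θ

lemma model_IOpenStep_iff (n : ℕ) : (IOpenStep n).Model M ↔
    PAminus.Model M ∧
      ∀ m (θ : Lor.Formula (Fin m ⊕ Fin 1)), θ.IsQF → M ⊨ indStepAx n θ :=
  model_paminus_union_iff fun _ θ => indStepAx n θ

lemma model_IOpenK_iff (n : ℕ) : (IOpenK n).Model M ↔
    PAminus.Model M ∧ ∀ m (θ : Lor.Formula (Fin m ⊕ Fin 1)), θ.IsQF → M ⊨ indKAx n θ :=
  model_paminus_union_iff fun _ θ => indKAx n θ

lemma model_IOpenLt_of_model_IOpen [IOpen.Model M] : IOpenLt.Model M :=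
  model_IOpenLt_iff.mpr ⟨inferInstance, fun _ θ hθ =>
    (realize_indLtAx θ).mpr fun z => (isOpenDefinable_realize hθ z).ltIndPrinciple⟩

lemma model_IOpen_of_model_IOpenLt [IOpenLt.Model M] : IOpen.Model M := by
  obtain ⟨_, h⟩ := model_IOpenLt_iff.mp ‹_›
  exact model_IOpen_iff.mpr ⟨inferInstance, fun m θ hθ =>
    (realize_indAx θ).mpr fun z => ((realize_indLtAx θ).mp (h m θ hθ) z).indPrinciple⟩

lemma model_IOpenK_of_model_IOpen (n : ℕ) [IOpen.Model M] : (IOpenK n).Model M :=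
  (model_IOpenK_iff n).mpr ⟨inferInstance, fun _ θ hθ => (realize_indKAx θ n).mpr fun z =>
    ((isOpenDefinable_realize hθ z).forall_lt_add (n + 1)).indPrinciple.kIndPrinciple⟩

lemma model_IOpenStep_of_model_IOpenK (n : ℕ) [(IOpenK n).Model M] : (IOpenStep n).Model M := by
  obtain ⟨_, h⟩ := (model_IOpenK_iff n).mp ‹_›
  exact (model_IOpenStep_iff n).mpr ⟨inferInstance, fun m θ hθ => (realize_indStepAx θ n).mpr
    fun z => ((realize_indKAx θ n).mp (h m θ hθ) z).stepIndPrinciple⟩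

lemma model_IOpen_of_model_IOpenStep (n : ℕ) [(IOpenStep n).Model M] : IOpen.Model M := by
  obtain ⟨_, h⟩ := (model_IOpenStep_iff n).mp ‹_›
  exact model_IOpen_iff.mpr ⟨inferInstance, fun m θ hθ =>
    (realize_indAx θ).mpr fun z => ((realize_indStepAx θ n).mp (h m θ hθ) z).indPrinciple⟩

theorem model_IOpen_iff_model_IOpenLt : IOpen.Model M ↔ IOpenLt.Model M :=
  ⟨fun _ => model_IOpenLt_of_model_IOpen, fun _ => model_IOpen_of_model_IOpenLt⟩

theorem model_IOpen_iff_model_IOpenStep (n : ℕ) : IOpen.Model M ↔ (IOpenStep n).Model M :=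
  ⟨fun _ => have := model_IOpenK_of_model_IOpen (M := M) n; model_IOpenStep_of_model_IOpenK n,
    fun _ => model_IOpen_of_model_IOpenStep n⟩

theorem model_IOpen_iff_model_IOpenK (n : ℕ) : IOpen.Model M ↔ (IOpenK n).Model M :=
  ⟨fun _ => model_IOpenK_of_model_IOpen n,
    fun _ => have := model_IOpenStep_of_model_IOpenK (M := M) n; model_IOpen_of_model_IOpenStep n⟩

end Theories

lemma models_sentence_iff_of_model_iff {T T' : Lor.Theory}
    (h : ∀ (M : Type) [Lor.Structure M], T.Model M ↔ T'.Model M) (σ : Lor.Sentence) :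
    T ⊨ᵇ σ ↔ T' ⊨ᵇ σ := by
  simp only [Theory.models_sentence_iff]
  refine ⟨fun hT M => ?_, fun hT' M => ?_⟩
  · have := (h M).mpr inferInstance
    exact hT (.of T M)
  · have := (h M).mp inferInstance
    exact hT' (.of T' M)

/-- For every `n ∈ ℕ`, the theories `IOpen`, `PA⁻ + {I^< θ : θ q.f.}`,
`PA⁻ + {I^{(n+1)-step} θ : θ q.f.}` and `PA⁻ + {I^{n+1} θ : θ q.f.}` are deductively
equivalent: they prove the same sentences. -/
theorem stmt5 (n : ℕ) (σ : Lor.Sentence) :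
    (IOpen ⊨ᵇ σ ↔ IOpenLt ⊨ᵇ σ) ∧ (IOpen ⊨ᵇ σ ↔ IOpenStep n ⊨ᵇ σ) ∧
      (IOpen ⊨ᵇ σ ↔ IOpenK n ⊨ᵇ σ) :=
  ⟨models_sentence_iff_of_model_iff (fun _ _ => model_IOpen_iff_model_IOpenLt) σ,
    models_sentence_iff_of_model_iff (fun _ _ => model_IOpen_iff_model_IOpenStep n) σ,
    models_sentence_iff_of_model_iff (fun _ _ => model_IOpen_iff_model_IOpenK n) σ⟩
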